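/- Let a, b ∈ G∖N with d(a*, b*) > 4, and suppose N(a) ⊆ N(b). Then a + b ∉ N ∪ {0} and a − b ∉ N ∪ {0}, and moreover: (1) N(a + b) = N(a) ⊆ N(b) ∩ N(−b); (2) N(a − b) = N(a) ⊆ N(b) ∩ N(−b). -/

import Mathlib

open scoped Pointwise

/-- The subset of `D` consisting of (the values of) the units belonging to `N`. -/
def unitsSet {D : Type*} [DivisionRing D] (N : Subgroup Dˣ) : Set D :=
  Units.val '' (N : Set Dˣ)

/-- For `a : D`, the set `N(a) = {n ∈ N : a + n ∈ N}`. -/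
def nSet {D : Type*} [DivisionRing D] (N : Subgroup Dˣ) (a : D) : Set D :=
  {x : D | x ∈ unitsSet N ∧ a + x ∈ unitsSet N}

/-- The commuting graph of a group: vertices are the nonidentity elements,
two distinct nonidentity elements are adjacent iff they commute. (The identity is
an isolated vertex.) -/
def commGraph (Q : Type*) [Group Q] : SimpleGraph Q where
  Adj a b := a ≠ b ∧ a ≠ 1 ∧ b ≠ 1 ∧ a * b = b * a
  symm := by
    constructor
    intro a b h
    exact ⟨Ne.symm h.1, h.2.2.1, h.2.1, h.2.2.2.symm⟩
  loopless := by constructor; intro a h; exact h.1 rfl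

/-- `distGT Γ u v k` : there is no path (walk) of length at most `k` from `u` to `v`,
i.e. `d(u,v) > k`. -/
def distGT {Q : Type*} (Γ : SimpleGraph Q) (u v : Q) (k : ℕ) : Prop :=
  ∀ p : Γ.Walk u v, k < p.length

/-!
If `y = x + n` with `n ∈ N`, then `n⁻¹ x` and `n⁻¹ y = n⁻¹ x + 1` commute, so `x*` and `y*`
are equal or adjacent in the commuting graph; as `-1 ∈ N`, moreover `(-x)* = x*`. Each claim
is proved by contradiction: were it false, one could write down a chain of at most four
elements of `G ∖ N` running from `a` to `±b` whose consecutive differences (or sums) lie in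
`N`, forcing `d(a*, b*) ≤ 4`.
-/

open QuotientGroup

lemma distGT.lt_edist {Q : Type*} {Γ : SimpleGraph Q} {u v : Q} {k : ℕ}
    (h : distGT Γ u v k) : (k : ℕ∞) < Γ.edist u v := by
  by_contra! hle
  obtain ⟨p, hp⟩ :=
    Γ.exists_walk_of_edist_ne_top (ne_top_of_le_ne_top (ENat.natCast_ne_top k) hle)
  rw [← hp, Nat.cast_le] at hle
  exact (h p).not_ge hle

lemma SimpleGraph.edist_le_add_of_le {V : Type*} {G : SimpleGraph V} {u v w : V} {m n : ℕ∞}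
    (huv : G.edist u v ≤ m) (hvw : G.edist v w ≤ n) : G.edist u w ≤ m + n :=
  G.edist_triangle.trans (add_le_add huv hvw)

lemma commGraph_edist_le_one {Q : Type*} [Group Q] {u v : Q} (hu : u ≠ 1) (hv : v ≠ 1)
    (h : Commute u v) : (commGraph Q).edist u v ≤ 1 := by
  rw [SimpleGraph.edist_le_one_iff_adj_or_eq]
  by_cases huv : u = v
  · exact Or.inr huv
  · exact Or.inl ⟨huv, hu, hv, h⟩

section UnitsSet

variable {D : Type*} [DivisionRing D] {N : Subgroup Dˣ}

lemma val_mem_unitsSet_iff {u : Dˣ} : (u : D) ∈ unitsSet N ↔ u ∈ N :=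
  Units.val_injective.mem_set_image

lemma exists_val_eq_of_notMem {x : D} (hx : x ∉ unitsSet N ∪ {0}) :
    ∃ u : Dˣ, u ∉ N ∧ (u : D) = x := by
  simp only [Set.mem_union, Set.mem_singleton_iff, not_or] at hx
  exact ⟨Units.mk0 x hx.2, fun h => hx.1 (val_mem_unitsSet_iff.2 h), rfl⟩

lemma neg_mem_unitsSet (hN : (-1 : Dˣ) ∈ N) {x : D} (hx : x ∈ unitsSet N) :
    -x ∈ unitsSet N := by
  obtain ⟨u, hu, rfl⟩ := hx
  exact ⟨-1 * u, mul_mem hN hu, by simp⟩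

lemma neg_notMem (hN : (-1 : Dˣ) ∈ N) {u : Dˣ} (hu : u ∉ N) : -u ∉ N :=
  fun h => hu (by simpa using mul_mem hN h)

lemma val_add_ne_zero (hN : (-1 : Dˣ) ∈ N) {u : Dˣ} (hu : u ∉ N) {x : D}
    (hx : x ∈ unitsSet N) : (u : D) + x ≠ 0 := fun h =>
  hu (val_mem_unitsSet_iff.1 (eq_neg_of_add_eq_zero_left h ▸ neg_mem_unitsSet hN hx))

lemma exists_val_eq_add (hN : (-1 : Dˣ) ∈ N) {u : Dˣ} (hu : u ∉ N) {x : D}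
    (hx : x ∈ unitsSet N) (h : (u : D) + x ∉ unitsSet N) :
    ∃ v : Dˣ, v ∉ N ∧ (v : D) = u + x :=
  exists_val_eq_of_notMem (by simp [h, val_add_ne_zero hN hu hx])

variable [N.Normal]

lemma mk_neg_eq_mk (hN : (-1 : Dˣ) ∈ N) (u : Dˣ) : (mk (-u) : Dˣ ⧸ N) = mk u := by
  rw [← neg_one_mul, mk_mul, (eq_one_iff _).2 hN, one_mul]

lemma commute_mk_of_sub_mem {x y : Dˣ} (h : (y : D) - x ∈ unitsSet N) :
    Commute (mk x : Dˣ ⧸ N) (mk y) := by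
  obtain ⟨n, hn, hxy⟩ := h
  have hmk (z : Dˣ) : (mk (n⁻¹ * z) : Dˣ ⧸ N) = mk z := by
    rw [mk_mul, (eq_one_iff _).2 (inv_mem hn), one_mul]
  have hval : ((n⁻¹ * y : Dˣ) : D) = (n⁻¹ * x : Dˣ) + 1 := by
    rw [Units.val_mul, Units.val_mul, ← Units.inv_mul n, ← mul_add, hxy, add_sub_cancel]
  have hcomm : Commute (n⁻¹ * x) (n⁻¹ * y) :=
    Commute.units_val_iff.1 <| hval ▸ (Commute.refl _).add_right (Commute.one_right _)
  rw [← hmk x, ← hmk y]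
  exact hcomm.map (mk' N)

lemma edist_mk_le_one_of_sub_mem {x y : Dˣ} (hx : x ∉ N) (hy : y ∉ N)
    (h : (y : D) - x ∈ unitsSet N) :
    (commGraph (Dˣ ⧸ N)).edist (mk x) (mk y) ≤ 1 :=
  commGraph_edist_le_one (mt (eq_one_iff x).1 hx) (mt (eq_one_iff y).1 hy)
    (commute_mk_of_sub_mem h)

lemma edist_mk_le_one_of_add_mem (hN : (-1 : Dˣ) ∈ N) {x y : Dˣ} (hx : x ∉ N) (hy : y ∉ N)
    (h : (x : D) + y ∈ unitsSet N) :
    (commGraph (Dˣ ⧸ N)).edist (mk x) (mk y) ≤ 1 := by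
  rw [← mk_neg_eq_mk hN x]
  exact edist_mk_le_one_of_sub_mem (neg_notMem hN hx) hy
    (by rwa [Units.val_neg, sub_neg_eq_add, add_comm])

end UnitsSet

section CommutingDistance

variable {D : Type*} [DivisionRing D] {N : Subgroup Dˣ} [N.Normal] {a b : Dˣ}

lemma add_notMem_of_one_lt_edist (hN : (-1 : Dˣ) ∈ N) (ha : a ∉ N) (hb : b ∉ N)
    (hd : 1 < (commGraph (Dˣ ⧸ N)).edist (mk a) (mk b)) :
    (a : D) + b ∉ unitsSet N ∪ {0} := by
  rintro (h | h)
  · exact (edist_mk_le_one_of_add_mem hN ha hb h).not_gt hd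
  · have hab : a = -b := Units.ext (by rw [Units.val_neg]; exact eq_neg_of_add_eq_zero_left h)
    rw [hab, mk_neg_eq_mk hN, SimpleGraph.edist_self] at hd
    exact not_lt_zero hd

lemma nSet_add_subset (hN : (-1 : Dˣ) ∈ N) (ha : a ∉ N) (hb : b ∉ N)
    (hd : 2 < (commGraph (Dˣ ⧸ N)).edist (mk a) (mk b)) :
    nSet N ((a : D) + b) ⊆ nSet N a := by
  rintro x ⟨hx, habx⟩
  refine ⟨hx, ?_⟩
  by_contra hax
  obtain ⟨w, hw, hwv⟩ := exists_val_eq_add hN ha hx hax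
  have haw := edist_mk_le_one_of_sub_mem ha hw (by rwa [hwv, add_sub_cancel_left])
  have hwb := edist_mk_le_one_of_add_mem hN hw hb (by rwa [hwv, add_right_comm])
  exact hd.not_ge ((SimpleGraph.edist_le_add_of_le haw hwb).trans_eq one_add_one_eq_two)

lemma subset_nSet_add (hN : (-1 : Dˣ) ∈ N) (ha : a ∉ N) (hb : b ∉ N)
    (hd : 2 < (commGraph (Dˣ ⧸ N)).edist (mk a) (mk b)) (hsub : nSet N a ⊆ nSet N b) :
    nSet N a ⊆ nSet N ((a : D) + b) := by
  rintro x ⟨hx, hax⟩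
  have hbx : (b : D) + x ∈ unitsSet N := (hsub ⟨hx, hax⟩).2
  refine ⟨hx, ?_⟩
  by_contra habx
  obtain ⟨v, hv, hvv⟩ := exists_val_eq_add hN ha hbx (by rwa [← add_assoc])
  have hav := edist_mk_le_one_of_sub_mem ha hv (by rwa [hvv, add_sub_cancel_left])
  have hvb := edist_mk_le_one_of_sub_mem hv hb
    (by rw [hvv, show (b : D) - (a + (b + x)) = -(a + x) by abel]; exact neg_mem_unitsSet hN hax)
  exact hd.not_ge ((SimpleGraph.edist_le_add_of_le hav hvb).trans_eq one_add_one_eq_two)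

lemma nSet_add_eq (hN : (-1 : Dˣ) ∈ N) (ha : a ∉ N) (hb : b ∉ N)
    (hd : 2 < (commGraph (Dˣ ⧸ N)).edist (mk a) (mk b)) (hsub : nSet N a ⊆ nSet N b) :
    nSet N ((a : D) + b) = nSet N a :=
  (nSet_add_subset hN ha hb hd).antisymm (subset_nSet_add hN ha hb hd hsub)

/-- For `x ∈ N(a)` with `-b + x ∉ N`, the path `a, a - x, a + b, -b + x, b` (up to signs, which
are invisible in `Dˣ ⧸ N`) has consecutive differences in `N`. -/
lemma nSet_subset_nSet_neg (hN : (-1 : Dˣ) ∈ N) (ha : a ∉ N) (hb : b ∉ N)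
    (hd : 4 < (commGraph (Dˣ ⧸ N)).edist (mk a) (mk b)) (hsub : nSet N a ⊆ nSet N b) :
    nSet N a ⊆ nSet N (-(b : D)) := by
  rintro x ⟨hx, hax⟩
  have hbx : (b : D) + x ∈ unitsSet N := (hsub ⟨hx, hax⟩).2
  refine ⟨hx, ?_⟩
  by_contra hbx'
  have hx' := neg_mem_unitsSet hN hx
  have hax' : (a : D) + -x ∉ unitsSet N := fun h => hbx' <| by
    simpa [add_comm] using neg_mem_unitsSet hN (hsub ⟨hx', h⟩).2
  obtain ⟨w, hw, hwv⟩ := exists_val_eq_add hN ha hx' hax'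
  obtain ⟨s, hs, hsv⟩ := exists_val_eq_of_notMem
    (add_notMem_of_one_lt_edist hN ha hb (lt_of_le_of_lt (by norm_num) hd))
  obtain ⟨c, hc, hcv⟩ := exists_val_eq_add hN (neg_notMem hN hb) hx (by rwa [Units.val_neg])
  rw [Units.val_neg] at hcv
  have haw := edist_mk_le_one_of_sub_mem ha hw (by rwa [hwv, add_sub_cancel_left])
  have hws := edist_mk_le_one_of_sub_mem hw hs
    (by rwa [hsv, hwv, show (a : D) + b - (a + -x) = b + x by abel])
  have hsc := edist_mk_le_one_of_add_mem hN hs hc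
    (by rwa [hsv, hcv, show (a : D) + b + (-b + x) = a + x by abel])
  have hcb := edist_mk_le_one_of_add_mem hN hc hb (by rwa [hcv, neg_add_cancel_comm])
  exact hd.not_ge ((SimpleGraph.edist_le_add_of_le haw <| SimpleGraph.edist_le_add_of_le hws <|
    SimpleGraph.edist_le_add_of_le hsc hcb).trans_eq (by norm_num))

end CommutingDistance

theorem stmt_5_general {D : Type*} [DivisionRing D] (N : Subgroup Dˣ)
    [N.Normal] (hF : ∀ x : Dˣ, (x : D) ∈ Set.center D → x ∈ N)
    (a b : Dˣ) (ha : a ∉ N) (hb : b ∉ N)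
    (hd : distGT (commGraph (Dˣ ⧸ N)) (QuotientGroup.mk a) (QuotientGroup.mk b) 4)
    (hsub : nSet N (a : D) ⊆ nSet N (b : D)) :
    (a : D) + (b : D) ∉ unitsSet N ∪ {0} ∧
    (a : D) - (b : D) ∉ unitsSet N ∪ {0} ∧
    -- (1)
    (nSet N ((a : D) + (b : D)) = nSet N (a : D) ∧
      nSet N (a : D) ⊆ nSet N (b : D) ∩ nSet N (-(b : D))) ∧
    -- (2)
    (nSet N ((a : D) - (b : D)) = nSet N (a : D) ∧
      nSet N (a : D) ⊆ nSet N (b : D) ∩ nSet N (-(b : D))) := by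
  have hN : (-1 : Dˣ) ∈ N := hF (-1) (by simp [Set.neg_mem_center, Set.one_mem_center])
  have hd₄ := hd.lt_edist
  have hboth := Set.subset_inter hsub (nSet_subset_nSet_neg hN ha hb hd₄ hsub)
  have add_case (c : Dˣ) (hc : c ∉ N) (hdc : 4 < (commGraph (Dˣ ⧸ N)).edist (mk a) (mk c))
      (hsubc : nSet N a ⊆ nSet N c) :
      (a : D) + c ∉ unitsSet N ∪ {0} ∧ nSet N ((a : D) + c) = nSet N a :=
    ⟨add_notMem_of_one_lt_edist hN ha hc (lt_of_le_of_lt (by norm_num) hdc),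
      nSet_add_eq hN ha hc (lt_of_le_of_lt (by norm_num) hdc) hsubc⟩
  obtain ⟨hadd, hadd_eq⟩ := add_case b hb hd₄ hsub
  obtain ⟨hdiff, hdiff_eq⟩ := add_case (-b) (neg_notMem hN hb) (by rwa [mk_neg_eq_mk hN])
    (by rw [Units.val_neg]; exact hboth.trans Set.inter_subset_right)
  rw [Units.val_neg, ← sub_eq_add_neg] at hdiff hdiff_eq
  exact ⟨hadd, hdiff, ⟨hadd_eq, hboth⟩, ⟨hdiff_eq, hboth⟩⟩

/-- Let `a, b ∈ G∖N` with `d(a*, b*) > 4` and `N(a) ⊆ N(b)`.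
Then `a + b ∉ N ∪ {0}`, `a − b ∉ N ∪ {0}`, and
`N(a + b) = N(a) ⊆ N(b) ∩ N(−b)` and `N(a − b) = N(a) ⊆ N(b) ∩ N(−b)`. -/
theorem stmt_5 {D : Type*} [DivisionRing D] [Infinite D] (N : Subgroup Dˣ)
    [N.Normal] (hF : ∀ x : Dˣ, (x : D) ∈ Set.center D → x ∈ N)
    (hfin : Finite (Dˣ ⧸ N))
    (a b : Dˣ) (ha : a ∉ N) (hb : b ∉ N)
    (hd : distGT (commGraph (Dˣ ⧸ N)) (QuotientGroup.mk a) (QuotientGroup.mk b) 4)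
    (hsub : nSet N (a : D) ⊆ nSet N (b : D)) :
    (a : D) + (b : D) ∉ unitsSet N ∪ {0} ∧
    (a : D) - (b : D) ∉ unitsSet N ∪ {0} ∧
    -- (1)
    (nSet N ((a : D) + (b : D)) = nSet N (a : D) ∧
      nSet N (a : D) ⊆ nSet N (b : D) ∩ nSet N (-(b : D))) ∧
    -- (2)
    (nSet N ((a : D) - (b : D)) = nSet N (a : D) ∧
      nSet N (a : D) ⊆ nSet N (b : D) ∩ nSet N (-(b : D))) :=
  stmt_5_general N hF a b ha hb hd hsub
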